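/- arXiv:1710.03848 — 5 statements merged into one kernel-verified Lean document; each statement's English description precedes it below -/
import Mathlib

section
/- The maximal attractor of the step skew product F equals the union of the fiber spines: ⋂_{n≥0} F^n(Σ_k × M) = ⋃_{ϑ∈Σ_k} {ϑ} × I_ϑ, where for each ϑ ∈ Σ_k the spine is I_ϑ = ⋂_{n≥1} f_{ϑ_{−1}}∘⋯∘f_{ϑ_{−n}}(M). -/
open Set Function Filter Topology

noncomputable section

/-- The shift map on two-sided sequences. -/
def shiftMap {k : ℕ} (θ : ℤ → Fin k) : ℤ → Fin k := fun i => θ (i + 1)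

/-- The step skew product `F(θ, x) = (σ θ, f_{θ₀} x)`. -/
def skewProd {k : ℕ} {M : Type*} (f : Fin k → M → M) :
    (ℤ → Fin k) × M → (ℤ → Fin k) × M :=
  fun p => (shiftMap p.1, f (p.1 0) p.2)

/-- Backward composition `f_{θ₋₁} ∘ ⋯ ∘ f_{θ₋ₙ}`. -/
def bcomp {k : ℕ} {M : Type*} (f : Fin k → M → M) (θ : ℤ → Fin k) : ℕ → M → M
  | 0 => id
  | n + 1 => bcomp f θ n ∘ f (θ (-((n : ℤ) + 1)))

/-- The spine `I_θ = ⋂_{n ≥ 1} f_{θ₋₁} ∘ ⋯ ∘ f_{θ₋ₙ}(M)`. -/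
def spine {k : ℕ} {M : Type*} (f : Fin k → M → M) (θ : ℤ → Fin k) : Set M :=
  ⋂ n : ℕ, bcomp f θ (n + 1) '' Set.univ

lemma iterate_skewProd {k : ℕ} {M : Type*} (f : Fin k → M → M) :
    ∀ (n : ℕ) (θ : ℤ → Fin k) (x : M),
      (skewProd f)^[n] (θ, x) =
        (fun i => θ (i + (n : ℤ)), bcomp f (fun i => θ (i + (n : ℤ))) n x)
  | 0, θ, x => by simp [bcomp]
  | n + 1, θ, x => by
    rw [Function.iterate_succ_apply]
    show (skewProd f)^[n] (shiftMap θ, f (θ 0) x) = _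
    rw [iterate_skewProd f n]
    have hθ : (fun i => shiftMap θ (i + (n : ℤ))) =
        (fun i => θ (i + ((n + 1 : ℕ) : ℤ))) := by
      funext i; simp only [shiftMap]; congr 1; push_cast; ring
    rw [hθ]
    show _ = (_, bcomp f _ n (f (θ (-((n : ℤ) + 1) + ((n + 1 : ℕ) : ℤ))) x))
    have h0 : (-((n : ℤ) + 1) + ((n + 1 : ℕ) : ℤ)) = 0 := by push_cast; ring
    rw [h0]

/-- The maximal attractor of the step skew product `F` equals the union of the fiber
spines: `⋂_{n ≥ 0} Fⁿ(Σ_k × M) = ⋃_θ {θ} × I_θ`. -/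
theorem maximal_attractor_eq_union_spines
    {k : ℕ} (hk : 1 ≤ k) {M : Type*} [MetricSpace M] [CompactSpace M] [Nonempty M]
    (f : Fin k → M → M) (hf : ∀ i, Continuous (f i)) :
    (⋂ n : ℕ, (skewProd f)^[n] '' Set.univ) =
      ⋃ θ : ℤ → Fin k, {θ} ×ˢ spine f θ := by
  ext ⟨θ, x⟩
  simp only [mem_iInter, mem_image, mem_iUnion, mem_prod, mem_singleton_iff, spine,
    image_univ, mem_range, mem_univ, true_and, Prod.exists]
  constructor
  · intro h
    refine ⟨θ, rfl, ?_⟩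
    intro n
    obtain ⟨θ', x', hp⟩ := h (n + 1)
    rw [iterate_skewProd] at hp
    have h1 := congrArg Prod.fst hp
    have h2 := congrArg Prod.snd hp
    simp only at h1 h2
    rw [h1] at h2
    exact ⟨x', h2⟩
  · rintro ⟨θ', rfl, h⟩ n
    cases n with
    | zero => exact ⟨θ, x, rfl⟩
    | succ m =>
      obtain ⟨x', hx'⟩ := h m
      refine ⟨fun i => θ (i - ((m + 1 : ℕ) : ℤ)), x', ?_⟩
      rw [iterate_skewProd]
      have hfun : (fun i => θ (i + ((m + 1 : ℕ) : ℤ) - ((m + 1 : ℕ) : ℤ))) = θ := by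
        funext i; congr 1; ring
      rw [hfun, hx']
end
end

section
/- Assume S_F ≠ ∅. Then for every point z = (ϑ, x) ∈ Σ_k × M such that the forward orbit {σ^n(ϑ) : n ≥ 0} is dense in Σ_k, the closure of graph ρ is contained in the ω-limit set ω_F(z), i.e., every point of the closure of graph ρ is a limit of a subsequence F^{n_j}(z) with n_j → ∞. -/
open Set Function Filter Topology

noncomputable section

/-- The set of weakly hyperbolic sequences: those `θ` whose spine is a singleton. -/
def weakHyp {k : ℕ} {M : Type*} (f : Fin k → M → M) : Set (ℤ → Fin k) :=
  {θ | ∃ x : M, spine f θ = {x}}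

/-- The ω-limit set of a point `z` under iteration of `F`: limits of subsequences
`F^{n_j}(z)` with `n_j → ∞`. -/
def omegaLim {α : Type*} [TopologicalSpace α] (F : α → α) (z : α) : Set α :=
  {w | ∃ φ : ℕ → ℕ, StrictMono φ ∧ Tendsto (fun j => F^[φ j] z) atTop (𝓝 w)}

/-!
The ω-limit set is the (closed) set of cluster points of the orbit, so it suffices to see that
each point `(ϑ, ρ ϑ)` of the graph is a cluster point of the orbit of `z = (θ, x)`. The fibre
coordinate of `Fⁿ z` is `f_{ψ₋₁} ∘ ⋯ ∘ f_{ψ₋ₙ} (x)` with `ψ = σⁿ θ`, a point of the first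
`m + 1` backward images of `ψ`. Those images shrink, by compactness, into any neighbourhood of
the spine `{ρ ϑ}` of `ϑ` once `m` is large, and depend only on `ψ₋₁, …, ψ₋₍ₘ₊₁₎`. As `σ` is a
continuous surjection, the dense orbit of `θ` returns infinitely often to every neighbourhood
of `ϑ`, and in particular to those on which these coordinates agree with `ϑ`.
-/

section OmegaLimit

variable {α : Type*} [TopologicalSpace α]

theorem omegaLim_eq_setOf_mapClusterPt [FirstCountableTopology α] (F : α → α) (z : α) :
    omegaLim F z = {w | MapClusterPt w atTop fun n => F^[n] z} := by
  ext w
  constructor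
  · rintro ⟨φ, hφ, hlim⟩
    exact MapClusterPt.of_comp hφ.tendsto_atTop hlim.mapClusterPt
  · exact MapClusterPt.tendsto_subseq

theorem isClosed_omegaLim [FirstCountableTopology α] (F : α → α) (z : α) :
    IsClosed (omegaLim F z) := by
  rw [omegaLim_eq_setOf_mapClusterPt]
  exact isClosed_setOfPred_clusterPt

theorem mapClusterPt_iterate_of_denseRange {T : α → α} (hT : Continuous T)
    (hT_surj : Surjective T) {x : α} (hx : DenseRange fun n : ℕ => T^[n] x) (y : α) :
    MapClusterPt y atTop fun n => T^[n] x := by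
  rw [mapClusterPt_iff_frequently]
  intro U hU
  refine frequently_atTop.2 fun N => ?_
  have hdense : DenseRange (T^[N] ∘ fun n : ℕ => T^[n] x) :=
    (hT_surj.iterate N).denseRange.comp hx (hT.iterate N)
  obtain ⟨_, hyU, n, rfl⟩ := mem_closure_iff_nhds.1 (hdense y) U hU
  refine ⟨n + N, Nat.le_add_left N n, ?_⟩
  rwa [add_comm, iterate_add_apply]

end OmegaLimit

section SkewProduct

variable {k : ℕ} {M : Type*}

theorem continuous_shiftMap : Continuous (shiftMap : (ℤ → Fin k) → ℤ → Fin k) :=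
  continuous_pi fun i => continuous_apply (i + 1)

theorem shiftMap_surjective : Surjective (shiftMap : (ℤ → Fin k) → ℤ → Fin k) :=
  fun θ => ⟨fun i => θ (i - 1), funext fun i => by simp [shiftMap]⟩

theorem shiftMap_iterate_apply (θ : ℤ → Fin k) (n : ℕ) (i : ℤ) :
    shiftMap^[n] θ i = θ (i + n) := by
  induction n generalizing i with
  | zero => simp
  | succ n ih =>
    rw [iterate_succ_apply', shiftMap, ih, Nat.cast_succ, add_assoc, add_comm 1]

theorem skewProd_iterate (f : Fin k → M → M) (n : ℕ) (θ : ℤ → Fin k) (x : M) :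
    (skewProd f)^[n] (θ, x) = (shiftMap^[n] θ, bcomp f (shiftMap^[n] θ) n x) := by
  induction n generalizing θ x with
  | zero => rfl
  | succ n ih =>
    have hfirst : shiftMap^[n + 1] θ (-((n : ℤ) + 1)) = θ 0 := by
      simp [shiftMap_iterate_apply]
    rw [iterate_succ_apply, skewProd, ih]
    simp only [bcomp, comp_apply, hfirst, iterate_succ_apply]

theorem continuous_bcomp [TopologicalSpace M] {f : Fin k → M → M} (hf : ∀ i, Continuous (f i))
    (ψ : ℤ → Fin k) (n : ℕ) : Continuous (bcomp f ψ n) := by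
  induction n with
  | zero => exact continuous_id
  | succ n ih => exact ih.comp (hf _)

theorem range_bcomp_antitone (f : Fin k → M → M) (ψ : ℤ → Fin k) :
    Antitone fun n => range (bcomp f ψ n) := by
  refine antitone_nat_of_succ_le fun n => ?_
  rintro _ ⟨y, rfl⟩
  exact ⟨_, rfl⟩

theorem bcomp_congr (f : Fin k → M → M) {ψ ψ' : ℤ → Fin k} {n : ℕ}
    (h : ∀ j < n, ψ (-((j : ℤ) + 1)) = ψ' (-((j : ℤ) + 1))) :
    bcomp f ψ n = bcomp f ψ' n := by
  induction n with
  | zero => rfl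
  | succ n ih =>
    rw [bcomp, bcomp, ih fun j hj => h j (Nat.lt_succ_of_lt hj), h n (Nat.lt_succ_self n)]

theorem exists_range_bcomp_subset [TopologicalSpace M] [CompactSpace M] [T2Space M]
    {f : Fin k → M → M} (hf : ∀ i, Continuous (f i)) (ψ : ℤ → Fin k) {V : Set M}
    (hV : V ∈ 𝓝ˢ (spine f ψ)) : ∃ m, range (bcomp f ψ (m + 1)) ⊆ V := by
  simp only [spine, image_univ] at hV
  have hanti : Antitone fun n => range (bcomp f ψ (n + 1)) :=
    fun a b hab => range_bcomp_antitone f ψ (Nat.succ_le_succ hab)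
  exact exists_subset_nhds_of_isCompact hanti.directed_ge
    (fun n => isCompact_range (continuous_bcomp hf ψ (n + 1)))
    fun y hy => nhds_le_nhdsSet hy hV

theorem mapClusterPt_skewProd_iterate [TopologicalSpace M] [CompactSpace M] [T2Space M]
    {f : Fin k → M → M} (hf : ∀ i, Continuous (f i)) {θ : ℤ → Fin k}
    (hdense : DenseRange fun n : ℕ => shiftMap^[n] θ) (x : M) {ϑ : ℤ → Fin k} {y : M}
    (hϑ : spine f ϑ = {y}) :
    MapClusterPt (ϑ, y) atTop fun n => (skewProd f)^[n] (θ, x) := by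
  rw [mapClusterPt_iff_frequently]
  intro s hs
  obtain ⟨U, hU, V, hV, hUV⟩ := mem_nhds_prod_iff.1 hs
  obtain ⟨m, hm⟩ := exists_range_bcomp_subset hf ϑ (V := V) (by rwa [hϑ, nhdsSet_singleton])
  have hagree : ∀ᶠ ψ in 𝓝 ϑ, ∀ j ∈ {j | j < m + 1}, ψ (-((j : ℤ) + 1)) = ϑ (-((j : ℤ) + 1)) :=
    (eventually_all_finite (finite_lt_nat _)).2 fun j _ =>
      tendsto_pure.1 (by simpa [nhds_discrete] using (continuous_apply _).tendsto ϑ)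
  have hreturn := mapClusterPt_iff_frequently.1
    (mapClusterPt_iterate_of_denseRange continuous_shiftMap shiftMap_surjective hdense ϑ) _
    (inter_mem hU hagree)
  refine (hreturn.and_eventually (eventually_ge_atTop (m + 1))).mono ?_
  rintro n ⟨⟨hnU, hn_agree⟩, hmn⟩
  refine hUV ?_
  rw [skewProd_iterate]
  refine ⟨hnU, hm ?_⟩
  rw [← bcomp_congr f hn_agree]
  exact range_bcomp_antitone f _ hmn ⟨x, rfl⟩

end SkewProduct

theorem closure_graph_subset_omegaLimit_general
    {k : ℕ} {M : Type*} [MetricSpace M] [CompactSpace M]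
    (f : Fin k → M → M) (hf : ∀ i, Continuous (f i))
    (ρ : (ℤ → Fin k) → M) (hρ : ∀ θ ∈ weakHyp f, spine f θ = {ρ θ})
    (θ : ℤ → Fin k) (x : M)
    (hdense : Dense (Set.range fun n : ℕ => shiftMap^[n] θ)) :
    closure ((fun ϑ => (ϑ, ρ ϑ)) '' weakHyp f) ⊆ omegaLim (skewProd f) (θ, x) := by
  refine closure_minimal ?_ (isClosed_omegaLim _ _)
  rintro _ ⟨ϑ, hϑ, rfl⟩
  rw [omegaLim_eq_setOf_mapClusterPt]
  exact mapClusterPt_skewProd_iterate hf hdense x (hρ ϑ hϑ)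

/-- If `S_F ≠ ∅`, then for every point `z = (θ, x)` whose base forward orbit is dense,
the closure of the graph of the coding map is contained in the ω-limit set of `z`. -/
theorem closure_graph_subset_omegaLimit
    {k : ℕ} (hk : 1 ≤ k) {M : Type*} [MetricSpace M] [CompactSpace M] [Nonempty M]
    (f : Fin k → M → M) (hf : ∀ i, Continuous (f i))
    (hS : (weakHyp f).Nonempty)
    (ρ : (ℤ → Fin k) → M) (hρ : ∀ θ ∈ weakHyp f, spine f θ = {ρ θ})
    (θ : ℤ → Fin k) (x : M)
    (hdense : Dense (Set.range fun n : ℕ => shiftMap^[n] θ)) :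
    closure ((fun ϑ => (ϑ, ρ ϑ)) '' weakHyp f) ⊆ omegaLim (skewProd f) (θ, x) :=
  closure_graph_subset_omegaLimit_general f hf ρ hρ θ x hdense
end
end

section
/- Assume S_F ≠ ∅. Then the maximal attractor of F restricted to Σ_k × cl A_F equals the closure of the graph of the coding map: ⋂_{n≥0} F^n(Σ_k × cl A_F) = cl(graph ρ). -/
set_option linter.unusedSectionVars false
set_option linter.unusedTactic false
set_option linter.unusedVariables false


open Set Function Filter Topology

noncomputable section

section aux
variable {k : ℕ} {M : Type*} [MetricSpace M] [CompactSpace M] {f : Fin k → M → M}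

lemma bcomp_congr_s4 {θ ξ : ℤ → Fin k} {n : ℕ} (h : ∀ i : ℤ, -(n:ℤ) ≤ i → i < 0 → ξ i = θ i) :
    ∀ m : ℕ, m ≤ n → bcomp f ξ m = bcomp f θ m := by
  intro m
  induction m with
  | zero => intro _; rfl
  | succ m ih =>
    intro hm
    have h1 : bcomp f ξ m = bcomp f θ m := ih (le_trans (Nat.le_succ m) hm)
    have h2 : ξ (-((m:ℤ)+1)) = θ (-((m:ℤ)+1)) := h _ (by omega) (by omega)
    show bcomp f ξ m ∘ f (ξ (-((m:ℤ)+1))) = bcomp f θ m ∘ f (θ (-((m:ℤ)+1)))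
    rw [h1, h2]

lemma bcomp_add (θ : ℤ → Fin k) (n m : ℕ) :
    bcomp f θ (n + m) = bcomp f θ n ∘ bcomp f (fun i => θ (i - n)) m := by
  induction m with
  | zero => rfl
  | succ m ih =>
    show bcomp f θ (n + m) ∘ f (θ (-((↑(n + m):ℤ) + 1))) = _
    rw [ih]
    show _ = bcomp f θ n ∘ (bcomp f (fun i => θ (i - n)) m ∘ f (θ (-((m:ℤ)+1) - n)))
    have : (-((↑(n + m):ℤ) + 1)) = (-((m:ℤ)+1) - n) := by push_cast; ring
    rw [this, Function.comp_assoc]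

lemma bcomp_cont (hf : ∀ i, Continuous (f i)) (θ : ℤ → Fin k) (n : ℕ) :
    Continuous (bcomp f θ n) := by
  induction n with
  | zero => exact continuous_id
  | succ n ih => exact ih.comp (hf _)

lemma bcomp_image_antitone (θ : ℤ → Fin k) :
    Antitone (fun m => bcomp f θ m '' (univ : Set M)) := by
  intro a b hab
  obtain ⟨c, rfl⟩ := Nat.exists_eq_add_of_le hab
  show bcomp f θ (a + c) '' univ ⊆ bcomp f θ a '' univ
  rw [bcomp_add (f := f) θ a c]
  rintro x ⟨y, -, rfl⟩
  exact ⟨_, mem_univ _, rfl⟩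

lemma exists_subseq_tendsto (K : ℕ → Set M) (hcl : ∀ m, IsClosed (K m)) (hmono : Antitone K)
    (u : ℕ → M) (hu : ∀ m, u m ∈ K m) :
    ∃ p, p ∈ (⋂ m, K m) ∧ ∃ φ : ℕ → ℕ, StrictMono φ ∧ Tendsto (u ∘ φ) atTop (𝓝 p) := by
  obtain ⟨p, -, φ, hφ, hlim⟩ := isCompact_univ.tendsto_subseq (fun n => mem_univ (u n))
  refine ⟨p, mem_iInter.mpr fun m => ?_, φ, hφ, hlim⟩
  have hev : ∀ᶠ j in atTop, (u ∘ φ) j ∈ K m := by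
    filter_upwards [eventually_ge_atTop m] with j hj
    exact hmono (le_trans hj (hφ.le_apply)) (hu (φ j))
  exact (hcl m).mem_of_tendsto hlim hev

def splice {k : ℕ} (θ : ℤ → Fin k) (n : ℕ) (η : ℤ → Fin k) : ℤ → Fin k :=
  fun i => if -(n:ℤ) ≤ i then θ i else η (i + n)

lemma bcomp_splice_add (θ : ℤ → Fin k) (n : ℕ) (η : ℤ → Fin k) (m : ℕ) :
    bcomp f (splice θ n η) (n + m) = bcomp f θ n ∘ bcomp f η m := by
  rw [bcomp_add]
  have e1 : bcomp f (splice θ n η) n = bcomp f θ n :=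
    bcomp_congr_s4 (fun i h1 h2 => if_pos h1) n le_rfl
  have e2 : bcomp f (fun i => splice θ n η (i - n)) m = bcomp f η m := by
    refine bcomp_congr_s4 (fun i h1 h2 => ?_) m le_rfl
    show (if -(n:ℤ) ≤ i - n then θ (i - n) else η (i - n + n)) = η i
    rw [if_neg (by omega)]
    congr 1; omega
  rw [e1, e2]

lemma spine_splice (hf : ∀ i, Continuous (f i)) (θ : ℤ → Fin k) (n : ℕ) {η : ℤ → Fin k}
    {y : M} (hη : spine f η = {y}) :
    spine f (splice θ n η) = {bcomp f θ n y} := by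
  apply Subset.antisymm
  · intro x hx
    have hx' : ∀ m : ℕ, x ∈ bcomp f θ n '' (bcomp f η (m+1) '' univ) := by
      intro m
      have h1 : x ∈ bcomp f (splice θ n η) ((n + m) + 1) '' univ := mem_iInter.mp hx (n + m)
      have h2 : (n + m) + 1 = n + (m + 1) := by omega
      rw [h2, bcomp_splice_add, image_comp] at h1
      exact h1
    choose u hu hux using fun m => hx' m
    obtain ⟨p, hp, φ, hφ, hlim⟩ := exists_subseq_tendsto (fun m => bcomp f η (m+1) '' univ)
      (fun m => ((isCompact_univ.image (bcomp_cont hf η (m+1))).isClosed))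
      (fun a b hab => bcomp_image_antitone η (by omega)) u hu
    have hpy : p = y := by
      have : p ∈ spine f η := hp
      rw [hη] at this; exact this
    have h3 : Tendsto (fun j => bcomp f θ n (u (φ j))) atTop (𝓝 (bcomp f θ n p)) :=
      ((bcomp_cont hf θ n).tendsto p).comp hlim
    have h4 : (fun j => bcomp f θ n (u (φ j))) = fun _ => x := funext fun j => hux (φ j)
    rw [h4] at h3
    have := tendsto_nhds_unique h3 tendsto_const_nhds
    rw [mem_singleton_iff, ← hpy, this]
  · rintro x (rfl : x = bcomp f θ n y)
    refine mem_iInter.mpr fun m => ?_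
    have hy : y ∈ bcomp f η (m+1) '' univ := by
      have : y ∈ spine f η := by rw [hη]; rfl
      exact mem_iInter.mp this m
    obtain ⟨z, -, hz⟩ := hy
    have : bcomp f θ n y ∈ bcomp f (splice θ n η) (n + (m+1)) '' univ := by
      rw [bcomp_splice_add]
      exact ⟨z, mem_univ z, by simp [hz]⟩
    exact bcomp_image_antitone (splice θ n η) (by omega : m + 1 ≤ n + (m+1)) this

lemma iter_fst (n : ℕ) (p : (ℤ → Fin k) × M) :
    ((skewProd f)^[n] p).1 = fun i => p.1 (i + n) := by
  induction n generalizing p with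
  | zero => simp
  | succ n ih =>
    rw [Function.iterate_succ_apply, ih]
    funext i
    show (shiftMap p.1) (i + n) = p.1 (i + (↑(n+1)))
    show p.1 (i + n + 1) = p.1 (i + (↑(n+1)))
    congr 1; push_cast; ring_nf

lemma iter_eval (n : ℕ) (θ : ℤ → Fin k) :
    ∀ y : M, (skewProd f)^[n] (fun i => θ (i - n), y) = (θ, bcomp f θ n y) := by
  induction n with
  | zero => intro y; simp [bcomp]
  | succ n ih =>
    intro y
    rw [Function.iterate_succ_apply]
    have h1 : skewProd f (fun i => θ (i - ↑(n+1)), y)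
        = (fun i => θ (i - n), f (θ (-((n:ℤ)+1))) y) := by
      unfold skewProd shiftMap
      refine Prod.ext ?_ ?_
      · funext i; show θ (i + 1 - ↑(n+1)) = θ (i - n); congr 1; omega
      · show f (θ (0 - ↑(n+1))) y = _
        have : (0:ℤ) - ↑(n+1) = -((n:ℤ)+1) := by push_cast; ring
        rw [this]
    rw [h1, ih]
    rfl

end aux

section aux2
variable {k : ℕ} {M : Type*} [MetricSpace M] [CompactSpace M] {f : Fin k → M → M}

lemma skewProd_cont (hf : ∀ i, Continuous (f i)) : Continuous (skewProd f) := by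
  refine Continuous.prodMk
    (continuous_pi fun i => (continuous_apply (i+1)).comp continuous_fst) ?_
  rw [continuous_iff_continuousAt]
  intro p
  have hc0 : Continuous fun q : (ℤ → Fin k) × M => q.1 0 :=
    (continuous_apply 0).comp continuous_fst
  have hev : ∀ᶠ q : (ℤ → Fin k) × M in 𝓝 p, q.1 0 = p.1 0 :=
    hc0.continuousAt.preimage_mem_nhds
      ((isOpen_discrete ({p.1 0} : Set (Fin k))).mem_nhds rfl)
  exact ContinuousAt.congr (((hf (p.1 0)).comp continuous_snd).continuousAt)
    (hev.mono fun q hq => by simp only [Function.comp_apply]; rw [hq])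

end aux2

/-- If `S_F ≠ ∅`, the maximal attractor of `F` restricted to `Σ_k × cl A_F` equals the
closure of the graph of the coding map:
`⋂_{n ≥ 0} Fⁿ(Σ_k × cl A_F) = cl (graph ρ)`. -/
theorem maximal_attractor_restricted_eq_closure_graph
    {k : ℕ} (hk : 1 ≤ k) {M : Type*} [MetricSpace M] [CompactSpace M] [Nonempty M]
    (f : Fin k → M → M) (hf : ∀ i, Continuous (f i))
    (hS : (weakHyp f).Nonempty)
    (ρ : (ℤ → Fin k) → M) (hρ : ∀ θ ∈ weakHyp f, spine f θ = {ρ θ}) :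
    (⋂ n : ℕ, (skewProd f)^[n] '' (Set.univ ×ˢ closure (ρ '' weakHyp f))) =
      closure ((fun ϑ => (ϑ, ρ ϑ)) '' weakHyp f) := by
  obtain ⟨η₀, hη₀⟩ := hS
  have hsplice : ∀ (θ : ℤ → Fin k) (n : ℕ) (η : ℤ → Fin k), η ∈ weakHyp f →
      splice θ n η ∈ weakHyp f ∧ ρ (splice θ n η) = bcomp f θ n (ρ η) := by
    intro θ n η hη
    have hs := spine_splice hf θ n (hρ η hη)
    have hw : splice θ n η ∈ weakHyp f := ⟨_, hs⟩
    refine ⟨hw, ?_⟩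
    rw [hρ _ hw] at hs
    exact singleton_eq_singleton_iff.mp hs
  have hcont : Continuous (skewProd f) := skewProd_cont hf
  apply Subset.antisymm
  · -- attractor ⊆ closure of graph
    rintro ⟨θ, x⟩ hz
    -- for each n, x is the bcomp-image of a point of closure A_F
    have hmem : ∀ n : ℕ, ∃ y ∈ closure (ρ '' weakHyp f), bcomp f θ n y = x := by
      intro n
      obtain ⟨⟨ω, y⟩, ⟨-, hy⟩, heq⟩ := mem_iInter.mp hz n
      have hω : ω = fun i => θ (i - n) := by
        have h2 : (fun i => ω (i + (n:ℤ))) = θ := by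
          rw [← iter_fst (f := f) n (ω, y), heq]
        funext j
        have h3 := congrFun h2 (j - n)
        simpa using h3
      rw [hω, iter_eval] at heq
      exact ⟨y, hy, congrArg Prod.snd heq⟩
    have happrox : ∀ n : ℕ, ∃ ξ ∈ weakHyp f,
        (∀ i : ℤ, -(n:ℤ) ≤ i → ξ i = θ i) ∧ dist x (ρ ξ) < 1 / (n + 1) := by
      intro n
      obtain ⟨y, hy, hyx⟩ := hmem n
      have hx : x ∈ closure (bcomp f θ n '' (ρ '' weakHyp f)) := by
        rw [← hyx]
        exact image_closure_subset_closure_image (bcomp_cont hf θ n) (mem_image_of_mem _ hy)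
      obtain ⟨b, ⟨w, ⟨η, hη, rfl⟩, rfl⟩, hb⟩ := Metric.mem_closure_iff.mp hx
        (1 / (n + 1)) (by positivity)
      refine ⟨splice θ n η, (hsplice θ n η hη).1, fun i hi => if_pos hi, ?_⟩
      rw [(hsplice θ n η hη).2]
      exact hb
    choose ξ hξw hξθ hξd using happrox
    apply mem_closure_iff_seq_limit.mpr
    refine ⟨fun n => (ξ n, ρ (ξ n)), fun n => ⟨ξ n, hξw n, rfl⟩, ?_⟩
    refine Tendsto.prodMk_nhds ?_ ?_
    · rw [tendsto_pi_nhds]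
      intro i
      refine Tendsto.congr' ?_ (tendsto_const_nhds (x := θ i))
      filter_upwards [eventually_ge_atTop (-i).toNat] with n hn
      exact (hξθ n i (by omega)).symm
    · rw [tendsto_iff_dist_tendsto_zero]
      refine squeeze_zero (g := fun n : ℕ => 1/((n:ℝ)+1)) (fun n => dist_nonneg) (fun n => ?_) ?_
      · exact le_of_lt (by rw [dist_comm]; exact hξd n)
      · exact tendsto_one_div_add_atTop_nhds_zero_nat
  · -- closure of graph ⊆ attractor
    refine closure_minimal ?_ (isClosed_iInter fun n =>
      ((isCompact_univ.prod isClosed_closure.isCompact).image (hcont.iterate n)).isClosed)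
    rintro _ ⟨θ, hθ, rfl⟩
    refine mem_iInter.mpr fun n => ?_
    set θ' : ℤ → Fin k := fun i => θ (i - n) with hθ'
    set u : ℕ → M := fun m => bcomp f θ' m (ρ η₀) with hu
    have humem : ∀ m, u m ∈ ρ '' weakHyp f := fun m =>
      ⟨splice θ' m η₀, (hsplice θ' m η₀ hη₀).1, (hsplice θ' m η₀ hη₀).2⟩
    obtain ⟨p, -, φ, hφ, hlim⟩ := exists_subseq_tendsto (fun m => bcomp f θ' m '' univ)
      (fun m => (isCompact_univ.image (bcomp_cont hf θ' m)).isClosed)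
      (bcomp_image_antitone θ') u (fun m => ⟨ρ η₀, mem_univ _, rfl⟩)
    have hpA : p ∈ closure (ρ '' weakHyp f) :=
      isClosed_closure.mem_of_tendsto hlim
        (Eventually.of_forall fun j => subset_closure (humem (φ j)))
    have hr : bcomp f θ n p = ρ θ := by
      have h5 : Tendsto (fun j => bcomp f θ n (u (φ j))) atTop (𝓝 (bcomp f θ n p)) :=
        ((bcomp_cont hf θ n).tendsto p).comp hlim
      have h6 : ∀ j, bcomp f θ n (u (φ j)) = bcomp f θ (n + φ j) (ρ η₀) := by
        intro j; rw [bcomp_add]; rfl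
      have h7 : bcomp f θ n p ∈ spine f θ := by
        refine mem_iInter.mpr fun m => ?_
        refine (isCompact_univ.image (bcomp_cont hf θ (m+1))).isClosed.mem_of_tendsto h5 ?_
        filter_upwards [eventually_ge_atTop (m+1)] with j hj
        rw [h6 j]
        exact bcomp_image_antitone θ (by have h8 : j ≤ φ j := hφ.le_apply; omega)
          ⟨ρ η₀, mem_univ _, rfl⟩
      rw [hρ θ hθ] at h7
      exact h7
    exact ⟨(θ', p), ⟨mem_univ _, hpA⟩, by rw [hθ', iter_eval, hr]⟩
end
end

section
/- Assume ℙ(S_F) = 1. Then the map ρ̂ : S_F → graph ρ, ρ̂(ϑ) = (ϑ, ρ(ϑ)), realizes a measure-theoretic isomorphism between (σ, ℙ) and (F, v_ℙ): σ(S_F) ⊆ S_F and F(graph ρ) ⊆ graph ρ; ρ̂ is a measurable bijection from S_F onto graph ρ whose inverse (ϑ, x) ↦ ϑ is measurable; F ∘ ρ̂ = ρ̂ ∘ σ on S_F; ρ̂_* ℙ = v_ℙ; and ℙ(S_F) = 1 = v_ℙ(graph ρ). -/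
open Set Function Filter Topology MeasureTheory

noncomputable section

/-! The spine of `σ θ` is the image of the spine of `θ` under `f_{θ₀}`: a continuous map on a
compact space commutes with decreasing intersections of closed sets, by Cantor's intersection
theorem applied to its fibres. Hence `σ` preserves `S_F` and `ρ (σ θ) = f_{θ₀} (ρ θ)`, which says
that `ρ̂` conjugates `σ` to `F`; `ρ̂` is injective since its first coordinate is the identity. -/

theorem Continuous.image_iInter_of_antitone {X Y : Type*} [TopologicalSpace X] [CompactSpace X]
    [TopologicalSpace Y] [T1Space Y] {g : X → Y} (hg : Continuous g) {A : ℕ → Set X}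
    (hA : Antitone A) (hA_closed : ∀ n, IsClosed (A n)) :
    g '' ⋂ n, A n = ⋂ n, g '' A n := by
  refine (image_iInter_subset A g).antisymm fun y hy => ?_
  have hfibre_closed : ∀ n, IsClosed (A n ∩ g ⁻¹' {y}) := fun n =>
    (hA_closed n).inter (isClosed_singleton.preimage hg)
  obtain ⟨x, hx⟩ := IsCompact.nonempty_iInter_of_sequence_nonempty_isCompact_isClosed
    (fun n => A n ∩ g ⁻¹' {y})
    (fun n => inter_subset_inter_left _ (hA n.le_succ))
    (fun n => by obtain ⟨x, hx, rfl⟩ := mem_iInter.1 hy n; exact ⟨x, hx, rfl⟩)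
    (hfibre_closed 0).isCompact hfibre_closed
  rw [mem_iInter] at hx
  exact ⟨x, mem_iInter.2 fun n => (hx n).1, (hx 0).2⟩

section Spine

variable {k : ℕ} {M : Type*} (f : Fin k → M → M) (θ : ℤ → Fin k)

theorem bcomp_succ_shiftMap (n : ℕ) :
    bcomp f (shiftMap θ) (n + 1) = f (θ 0) ∘ bcomp f θ n := by
  induction n with
  | zero => simp [bcomp, shiftMap]
  | succ n ih =>
    rw [bcomp, ih, bcomp, shiftMap, comp_assoc]
    congr 4

theorem antitone_range_bcomp : Antitone fun n => range (bcomp f θ n) :=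
  antitone_nat_of_succ_le fun n => by
    rw [bcomp, range_comp]
    exact image_subset_range _ _

theorem spine_eq_iInter_range_bcomp : spine f θ = ⋂ n, range (bcomp f θ n) := by
  simp only [spine, image_univ]
  exact (antitone_range_bcomp f θ).iInter_nat_add 1

variable [TopologicalSpace M] {f}

theorem continuous_bcomp_s11 (hf : ∀ i, Continuous (f i)) : ∀ n, Continuous (bcomp f θ n)
  | 0 => continuous_id
  | n + 1 => (continuous_bcomp_s11 hf n).comp (hf _)

variable [CompactSpace M] [T2Space M]

theorem spine_shiftMap (hf : ∀ i, Continuous (f i)) :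
    spine f (shiftMap θ) = f (θ 0) '' spine f θ := by
  rw [spine_eq_iInter_range_bcomp f θ,
    (hf (θ 0)).image_iInter_of_antitone (antitone_range_bcomp f θ)
      fun n => (isCompact_range (continuous_bcomp_s11 θ hf n)).isClosed]
  simp only [spine, image_univ, bcomp_succ_shiftMap, range_comp]

theorem spine_shiftMap_of_eq_singleton (hf : ∀ i, Continuous (f i)) {x : M}
    (hx : spine f θ = {x}) : spine f (shiftMap θ) = {f (θ 0) x} := by
  rw [spine_shiftMap θ hf, hx, image_singleton]

end Spine

theorem MeasureTheory.Measure.map_image_eq_one {α β : Type*} [MeasurableSpace α]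
    [MeasurableSpace β] {μ : Measure α} [IsProbabilityMeasure μ] {g : α → β}
    (hg : Measurable g) {s : Set α} (hs : μ s = 1) : μ.map g (g '' s) = 1 := by
  have := isProbabilityMeasure_map (μ := μ) hg.aemeasurable
  exact le_antisymm prob_le_one (hs ▸ le_map_apply_image hg.aemeasurable s)

theorem coding_map_isomorphism_general
    {k : ℕ} {M : Type*} [MetricSpace M] [CompactSpace M]
    [MeasurableSpace M]
    (f : Fin k → M → M) (hf : ∀ i, Continuous (f i))
    (ℙ : Measure (ℤ → Fin k)) [IsProbabilityMeasure ℙ]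
    (hS : ℙ (weakHyp f) = 1)
    (ρ : (ℤ → Fin k) → M) (hρ : ∀ θ ∈ weakHyp f, spine f θ = {ρ θ})
    (hρm : Measurable ρ) :
    Set.MapsTo shiftMap (weakHyp f) (weakHyp f) ∧
      Set.MapsTo (skewProd f) ((fun θ => (θ, ρ θ)) '' weakHyp f)
        ((fun θ => (θ, ρ θ)) '' weakHyp f) ∧
      Set.BijOn (fun θ => (θ, ρ θ)) (weakHyp f) ((fun θ => (θ, ρ θ)) '' weakHyp f) ∧
      Measurable (fun θ => (θ, ρ θ) : (ℤ → Fin k) → (ℤ → Fin k) × M) ∧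
      Measurable (Prod.fst : (ℤ → Fin k) × M → (ℤ → Fin k)) ∧
      (∀ θ ∈ weakHyp f, skewProd f (θ, ρ θ) = (shiftMap θ, ρ (shiftMap θ))) ∧
      Measure.map (fun θ => (θ, ρ θ)) ℙ ((fun θ => (θ, ρ θ)) '' weakHyp f) = 1 := by
  have hspine : ∀ θ ∈ weakHyp f, spine f (shiftMap θ) = {f (θ 0) (ρ θ)} := fun θ hθ =>
    spine_shiftMap_of_eq_singleton θ hf (hρ θ hθ)
  have hmapsTo : MapsTo shiftMap (weakHyp f) (weakHyp f) := fun θ hθ => ⟨_, hspine θ hθ⟩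
  have hconj : ∀ θ ∈ weakHyp f, skewProd f (θ, ρ θ) = (shiftMap θ, ρ (shiftMap θ)) := by
    intro θ hθ
    have hρσ := (hρ _ (hmapsTo hθ)).symm.trans (hspine θ hθ)
    rw [singleton_eq_singleton_iff] at hρσ
    rw [skewProd, hρσ]
  have hmeas : Measurable fun θ => (θ, ρ θ) := measurable_id.prodMk hρm
  refine ⟨hmapsTo, ?_, (LeftInverse.injective (g := Prod.fst) fun _ => rfl).injOn.bijOn_image,
    hmeas, measurable_fst, hconj, Measure.map_image_eq_one hmeas hS⟩
  rintro _ ⟨θ, hθ, rfl⟩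
  exact hconj θ hθ ▸ mem_image_of_mem _ (hmapsTo hθ)

/-- If `ℙ(S_F) = 1`, the map `ρ̂(θ) = (θ, ρ(θ))` realizes a measure-theoretic
isomorphism between `(σ, ℙ)` and `(F, v_ℙ)`: `σ(S_F) ⊆ S_F`, `F(graph ρ) ⊆ graph ρ`,
`ρ̂` is a measurable bijection from `S_F` onto `graph ρ` with measurable inverse
(the projection), `F ∘ ρ̂ = ρ̂ ∘ σ` on `S_F`, and `v_ℙ(graph ρ) = 1 = ℙ(S_F)`. -/
theorem coding_map_isomorphism
    {k : ℕ} (hk : 1 ≤ k) {M : Type*} [MetricSpace M] [CompactSpace M] [Nonempty M]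
    [MeasurableSpace M] [BorelSpace M]
    (f : Fin k → M → M) (hf : ∀ i, Continuous (f i))
    (ℙ : Measure (ℤ → Fin k)) [IsProbabilityMeasure ℙ]
    (hinv : Measure.map shiftMap ℙ = ℙ)
    (hS : ℙ (weakHyp f) = 1)
    (ρ : (ℤ → Fin k) → M) (hρ : ∀ θ ∈ weakHyp f, spine f θ = {ρ θ})
    (hρm : Measurable ρ) :
    Set.MapsTo shiftMap (weakHyp f) (weakHyp f) ∧
      Set.MapsTo (skewProd f) ((fun θ => (θ, ρ θ)) '' weakHyp f)
        ((fun θ => (θ, ρ θ)) '' weakHyp f) ∧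
      Set.BijOn (fun θ => (θ, ρ θ)) (weakHyp f) ((fun θ => (θ, ρ θ)) '' weakHyp f) ∧
      Measurable (fun θ => (θ, ρ θ) : (ℤ → Fin k) → (ℤ → Fin k) × M) ∧
      Measurable (Prod.fst : (ℤ → Fin k) × M → (ℤ → Fin k)) ∧
      (∀ θ ∈ weakHyp f, skewProd f (θ, ρ θ) = (shiftMap θ, ρ (shiftMap θ))) ∧
      Measure.map (fun θ => (θ, ρ θ)) ℙ ((fun θ => (θ, ρ θ)) '' weakHyp f) = 1 :=
  coding_map_isomorphism_general f hf ℙ hS ρ hρ hρm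
end
end

section
/- For every sequence (μ_n)_{n≥1} of Borel probability measures on M and every ϑ ∈ S_F, the measures (f_{ϑ_{−1}}∘⋯∘f_{ϑ_{−n}})_* μ_n converge weakly, as n → ∞, to the Dirac measure δ_{ρ(ϑ)}: for every continuous g : M → ℝ, ∫ g d((f_{ϑ_{−1}}∘⋯∘f_{ϑ_{−n}})_* μ_n) → g(ρ(ϑ)). -/
open Set Function Filter Topology MeasureTheory

noncomputable section

/-- For every sequence `(μₙ)` of Borel probability measures on `M` and every weakly
hyperbolic sequence `θ` with spine `{x₀}`, the measures `(f_{θ₋₁}∘⋯∘f_{θ₋ₙ})_* μₙ`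
converge weakly to the Dirac measure at `x₀ = ρ(θ)`. -/
theorem pushforward_sequence_tendsto_dirac
    {k : ℕ} (hk : 1 ≤ k) {M : Type*} [MetricSpace M] [CompactSpace M] [Nonempty M]
    [MeasurableSpace M] [BorelSpace M]
    (f : Fin k → M → M) (hf : ∀ i, Continuous (f i))
    (μ : ℕ → Measure M) (hμ : ∀ n, IsProbabilityMeasure (μ n))
    (θ : ℤ → Fin k) (hθ : θ ∈ weakHyp f)
    (x₀ : M) (hx₀ : spine f θ = {x₀})
    (g : M → ℝ) (hg : Continuous g) :
    Tendsto (fun n : ℕ => ∫ x, g x ∂ (Measure.map (bcomp f θ n) (μ n))) atTop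
      (𝓝 (g x₀)) := by
  have hBc : ∀ n, Continuous (bcomp f θ n) := by
    intro n; induction n with
    | zero => exact continuous_id
    | succ n ih => exact ih.comp (hf _)
  set K : ℕ → Set M := fun n => bcomp f θ (n + 1) '' Set.univ with hKdef
  have hKcomp : ∀ n, IsCompact (K n) := fun n => isCompact_univ.image (hBc _)
  have hKanti : Antitone K := by
    apply antitone_nat_of_succ_le
    intro n y hy
    obtain ⟨x, -, rfl⟩ := hy
    exact ⟨f (θ (-((n : ℤ) + 1 + 1))) x, trivial, by
      show bcomp f θ (n + 1 + 1) x = bcomp f θ (n + 1) _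
      rw [bcomp]
      simp [Function.comp]⟩
  have hKinter : (⋂ n, K n) = {x₀} := hx₀
  have hU : ∀ U : Set M, IsOpen U → x₀ ∈ U → ∃ N, ∀ n ≥ N, K n ⊆ U := by
    intro U hUo hxU
    have hclosed : ∀ n, IsClosed (K n \ U) := fun n => (hKcomp n).isClosed.sdiff hUo
    have hempty : (Set.univ ∩ ⋂ n, (K n \ U)) = ∅ := by
      rw [Set.univ_inter, Set.eq_empty_iff_forall_notMem]
      intro x hx
      have h1 : x ∈ ⋂ n, K n := Set.mem_iInter.2 fun n => (Set.mem_iInter.1 hx n).1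
      rw [hKinter, Set.mem_singleton_iff] at h1
      exact (Set.mem_iInter.1 hx 0).2 (h1 ▸ hxU)
    have hdir : Directed (· ⊇ ·) (fun n => K n \ U) := fun m n =>
      ⟨max m n, Set.diff_subset_diff_left (hKanti (le_max_left m n)),
        Set.diff_subset_diff_left (hKanti (le_max_right m n))⟩
    obtain ⟨N, hN⟩ := isCompact_univ.elim_directed_family_closed _ hclosed hempty hdir
    refine ⟨N, fun n hn x hx => ?_⟩
    by_contra hxU'
    exact Set.eq_empty_iff_forall_notMem.1 hN x ⟨trivial, hKanti hn hx, hxU'⟩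
  rw [Metric.tendsto_atTop]
  intro ε hε
  set U : Set M := g ⁻¹' Metric.ball (g x₀) (ε / 2) with hUdef
  have hUo : IsOpen U := Metric.isOpen_ball.preimage hg
  have hxU : x₀ ∈ U := by simp [hUdef, Metric.mem_ball, hε]
  obtain ⟨N, hN⟩ := hU U hUo hxU
  refine ⟨N + 1, fun n hn => ?_⟩
  obtain ⟨m, rfl, hm⟩ : ∃ m, n = m + 1 ∧ N ≤ m := ⟨n - 1, by omega, by omega⟩
  haveI := hμ (m + 1)
  rw [MeasureTheory.integral_map (hBc _).measurable.aemeasurable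
    hg.aestronglyMeasurable]
  have hbound : ∀ x : M, ‖g (bcomp f θ (m + 1) x) - g x₀‖ ≤ ε / 2 := by
    intro x
    have hmem : bcomp f θ (m + 1) x ∈ U := hN m hm ⟨x, trivial, rfl⟩
    have := Metric.mem_ball.1 hmem
    rw [Real.norm_eq_abs, ← Real.dist_eq]
    exact this.le
  have hint : Integrable (fun x => g (bcomp f θ (m + 1) x)) (μ (m + 1)) := by
    have := ((hg.comp (hBc (m + 1))).continuousOn.integrableOn_compact
      (μ := μ (m + 1)) (isCompact_univ (X := M)))
    rwa [MeasureTheory.integrableOn_univ] at this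
  have key : dist (∫ x, g (bcomp f θ (m + 1) x) ∂ μ (m + 1)) (g x₀) ≤ ε / 2 := by
    rw [dist_eq_norm]
    have : (∫ x, g (bcomp f θ (m + 1) x) ∂ μ (m + 1)) - g x₀
        = ∫ x, (g (bcomp f θ (m + 1) x) - g x₀) ∂ μ (m + 1) := by
      rw [MeasureTheory.integral_sub hint (integrable_const _)]
      simp
    rw [this]
    calc ‖∫ x, (g (bcomp f θ (m + 1) x) - g x₀) ∂ μ (m + 1)‖
        ≤ (ε / 2) * ((μ (m + 1)) Set.univ).toReal :=
          norm_integral_le_of_norm_le_const (Filter.Eventually.of_forall hbound)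
      _ = ε / 2 := by simp
  linarith [key]
end
end
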